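/- The restriction of the generator to functionals linear in π determines the filter dynamics: for the second-order differential operator L on ℝ^d × ℝ^m given by Lφ = (bπ)ᵀ∇_x φ + (Λᵀπ)ᵀ∇_π φ + ½Δ_x φ + (σ(x,π)∇_x)ᵀ∇_π φ with σ(x,π) = (D(π) − ππᵀ)b(x)ᵀ, and for any φ of the form φ(x,π) = πᵀψ(x) with ψ : ℝ^d → ℝ^m twice continuously differentiable, one has L(πᵀψ)(x,π) = πᵀ[ Λ(x)ψ(x) + ½Δ_x ψ(x) + D(bᵀ(x)∇_x)ψ(x) ], where D(bᵀ∇_x)ψ denotes the vector with i-th component (b(x)1_i)ᵀ∇ψ_i(x). In particular L maps π-linear functionals to π-linear functionals. -/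

import Mathlib

/-!
The identity is linear algebra once the derivatives of `πᵀψ` are pushed inside the sum over `i`.
The generator term gives `(Λᵀπ)ᵀψ = πᵀΛψ`, and in the mixed term `(D(π) − ππᵀ)bᵀ` the part
`D(π)bᵀ` yields `πᵀ D(bᵀ∇)ψ`, while `−ππᵀbᵀ` cancels the drift term `(bπ)ᵀ∇(πᵀψ)` exactly.
-/

open Matrix Finset

/-- The partial derivative `∂f/∂x_j` at `x`. -/
noncomputable def pd {d : ℕ} (f : (Fin d → ℝ) → ℝ) (x : Fin d → ℝ) (j : Fin d) : ℝ :=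
  fderiv ℝ f x (Pi.single j 1)

section PartialDerivative

variable {d : ℕ}

theorem pd_sum_const_mul {ι : Type*} [Fintype ι] (c : ι → ℝ) {f : ι → (Fin d → ℝ) → ℝ}
    {x : Fin d → ℝ} (hf : ∀ i, DifferentiableAt ℝ (f i) x) (j : Fin d) :
    pd (fun y => ∑ i, c i * f i y) x j = ∑ i, c i * pd (f i) x j := by
  simp only [pd, fderiv_fun_sum fun i _ => (hf i).const_mul (c i), _root_.sum_apply,
    fderiv_const_mul (hf _), _root_.smul_apply, smul_eq_mul]

theorem ContDiff.pd {n : WithTop ℕ∞} {f : (Fin d → ℝ) → ℝ} (hf : ContDiff ℝ (n + 1) f)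
    (j : Fin d) : ContDiff ℝ n (fun y => pd f y j) :=
  (hf.fderiv_right le_rfl).clm_apply contDiff_const

end PartialDerivative

theorem drift_add_covariance_eq {m d : ℕ} (π : Fin m → ℝ) (B : Matrix (Fin d) (Fin m) ℝ)
    (G : Fin m → Fin d → ℝ) :
    ∑ j, (B *ᵥ π) j * ∑ i, π i * G i j
        + ∑ i, ∑ j, ((diagonal π - vecMulVec π π) * Bᵀ) i j * G i j
      = ∑ i, π i * ∑ j, B j i * G i j := by
  have hcov : ∀ i j, ((diagonal π - vecMulVec π π) * Bᵀ) i j = π i * B j i - π i * (B *ᵥ π) j := by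
    intro i j
    rw [Matrix.sub_mul, vecMulVec_mul, ← mulVec_transpose, transpose_transpose, Matrix.sub_apply,
      diagonal_mul, vecMulVec_apply, transpose_apply]
  simp only [hcov, sub_mul, sum_sub_distrib, mul_sum, mul_assoc, mul_left_comm (π _)]
  rw [sum_comm]
  ring

theorem generator_on_pi_linear_general (m d : ℕ) (x : Fin d → ℝ)
    (π : Fin m → ℝ)
    (B : Matrix (Fin d) (Fin m) ℝ) (L : Matrix (Fin m) (Fin m) ℝ)
    (ψ : (Fin d → ℝ) → Fin m → ℝ) (hψ : ∀ i, ContDiff ℝ 2 (fun y => ψ y i)) :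
    -- (bπ)ᵀ ∇_x φ
    (∑ j, B.mulVec π j * pd (fun y => ∑ i, π i * ψ y i) x j)
      -- (Λᵀπ)ᵀ ∇_π φ
      + (∑ i, L.transpose.mulVec π i * ψ x i)
      -- ½ Δ_x φ
      + (1 / 2) * (∑ j, pd (fun y => pd (fun z => ∑ i, π i * ψ z i) y j) x j)
      -- (σ(x,π) ∇_x)ᵀ ∇_π φ
      + (∑ i, ∑ j,
          ((Matrix.diagonal π - Matrix.vecMulVec π π) * B.transpose) i j
            * pd (fun y => ψ y i) x j)
    = ∑ i, π i *
        (L.mulVec (ψ x) i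
          + (1 / 2) * (∑ j, pd (fun y => pd (fun z => ψ z i) y j) x j)
          + ∑ j, B j i * pd (fun y => ψ y i) x j) := by
  have grad : ∀ y j, pd (fun z => ∑ i, π i * ψ z i) y j = ∑ i, π i * pd (fun z => ψ z i) y j :=
    fun y j => pd_sum_const_mul π (fun i => ((hψ i).differentiable two_ne_zero).differentiableAt) j
  have lap : ∀ j, pd (fun y => pd (fun z => ∑ i, π i * ψ z i) y j) x j
      = ∑ i, π i * pd (fun y => pd (fun z => ψ z i) y j) x j := by
    intro j
    simp only [grad]
    exact pd_sum_const_mul π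
      (fun i => (((hψ i).pd j).differentiable one_ne_zero).differentiableAt) j
  have markov : ∑ i, (Lᵀ *ᵥ π) i * ψ x i = ∑ i, π i * (L *ᵥ ψ x) i := by
    simpa only [dotProduct, mulVec_transpose] using (dotProduct_mulVec π L (ψ x)).symm
  have halve : (1 / 2 : ℝ) * ∑ j, ∑ i, π i * pd (fun y => pd (ψ · i) y j) x j
      = ∑ i, π i * (1 / 2 * ∑ j, pd (fun y => pd (ψ · i) y j) x j) := by
    rw [sum_comm]
    simp only [mul_sum]
    exact sum_congr rfl fun _ _ => sum_congr rfl fun _ _ => by ring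
  simp only [lap, markov]
  simp only [grad, mul_add, sum_add_distrib]
  linear_combination drift_add_covariance_eq π B (fun i j => pd (ψ · i) x j) + halve

/-- The generator `L` of the pair `(X, π)` maps `π`-linear functionals to `π`-linear
functionals: for `φ(x,π) = πᵀψ(x)`,
`L(πᵀψ) = πᵀ[Λψ + ½Δ_x ψ + D(bᵀ∇_x)ψ]`, where `D(bᵀ∇_x)ψ` has `i`-th component
`(b 1_i)ᵀ ∇ψ_i` and `σ(x,π) = (D(π) − ππᵀ) bᵀ`. -/
theorem generator_on_pi_linear (m d : ℕ) (x : Fin d → ℝ)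
    (π : Fin m → ℝ) (hπ0 : ∀ i, 0 ≤ π i) (hπ1 : ∑ i, π i = 1)
    (B : Matrix (Fin d) (Fin m) ℝ) (L : Matrix (Fin m) (Fin m) ℝ)
    (hL : ∀ i, ∑ j, L i j = 0)
    (ψ : (Fin d → ℝ) → Fin m → ℝ) (hψ : ∀ i, ContDiff ℝ 2 (fun y => ψ y i)) :
    -- (bπ)ᵀ ∇_x φ
    (∑ j, B.mulVec π j * pd (fun y => ∑ i, π i * ψ y i) x j)
      -- (Λᵀπ)ᵀ ∇_π φ
      + (∑ i, L.transpose.mulVec π i * ψ x i)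
      -- ½ Δ_x φ
      + (1 / 2) * (∑ j, pd (fun y => pd (fun z => ∑ i, π i * ψ z i) y j) x j)
      -- (σ(x,π) ∇_x)ᵀ ∇_π φ
      + (∑ i, ∑ j,
          ((Matrix.diagonal π - Matrix.vecMulVec π π) * B.transpose) i j
            * pd (fun y => ψ y i) x j)
    = ∑ i, π i *
        (L.mulVec (ψ x) i
          + (1 / 2) * (∑ j, pd (fun y => pd (fun z => ψ z i) y j) x j)
          + ∑ j, B j i * pd (fun y => ψ y i) x j) :=
  generator_on_pi_linear_general m d x π B L ψ hψ
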